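/- In the ring ℂ(x)[∂] of differential operators over the field of rational functions with derivation d/dx, the operators L = ∂³ − (15/x²)∂ + 15/x³ + h and P4 = ∂⁴ − (20/x²)∂² + (40/x³)∂ commute, i.e. L·P4 = P4·L, for every complex constant h. -/

import Mathlib

/-!
The quotient rule does not depend on the representing fraction, so `ratD` is a `ℂ`-derivation
of `ℂ(x)` with `ratD x = 1`. Expanding both compositions by additivity and the Leibniz rule,
with `(a / xⁿ)' = a' / xⁿ - n a / xⁿ⁺¹` for the coefficients, writes each side as a combination of
`f, f', …, f⁽⁷⁾` with coefficients in `ℂ[h, x⁻¹]`, and these coincide.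
-/

open RatFunc

/-- The derivation `d/dx` on the differential field `ℂ(x)` of rational functions,
given by the quotient rule on the (coprime) numerator and denominator. -/
noncomputable def ratD (f : RatFunc ℂ) : RatFunc ℂ :=
  (algebraMap (Polynomial ℂ) (RatFunc ℂ) (Polynomial.derivative f.num)
      * algebraMap (Polynomial ℂ) (RatFunc ℂ) f.denom
    - algebraMap (Polynomial ℂ) (RatFunc ℂ) f.num
      * algebraMap (Polynomial ℂ) (RatFunc ℂ) (Polynomial.derivative f.denom))
    / algebraMap (Polynomial ℂ) (RatFunc ℂ) f.denom ^ 2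

/-- The operator `L = ∂³ - (15/x²)∂ + 15/x³ + h`, acting on `ℂ(x)`. -/
noncomputable def opL (h : ℂ) (f : RatFunc ℂ) : RatFunc ℂ :=
  ratD^[3] f - 15 / X ^ 2 * ratD f + (15 / X ^ 3 + RatFunc.C h) * f

/-- The operator `P₄ = ∂⁴ - (20/x²)∂² + (40/x³)∂`, acting on `ℂ(x)`. -/
noncomputable def opP4 (f : RatFunc ℂ) : RatFunc ℂ :=
  ratD^[4] f - 20 / X ^ 2 * ratD^[2] f + 40 / X ^ 3 * ratD f

section QuotientRule

open Polynomial (derivative derivative_mul)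

local notation "ι" => algebraMap (Polynomial ℂ) (RatFunc ℂ)

theorem ratD_algebraMap_div (p q : Polynomial ℂ) (hq : q ≠ 0) :
    ratD (ι p / ι q) = (ι (derivative p) * ι q - ι p * ι (derivative q)) / ι q ^ 2 := by
  set f := ι p / ι q
  have hb : ι f.denom ≠ 0 := algebraMap_ne_zero f.denom_ne_zero
  have hq' : ι q ≠ 0 := algebraMap_ne_zero hq
  have cross : f.num * q = p * f.denom := algebraMap_injective ℂ <| by
    rw [map_mul, map_mul, ← div_eq_div_iff hb hq', num_div_denom]
  have dcross := congrArg (fun r => ι (derivative r)) cross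
  replace cross := congrArg ι cross
  simp only [derivative_mul, map_mul, map_add] at cross dcross
  rw [ratD, div_eq_div_iff (pow_ne_zero 2 hb) (pow_ne_zero 2 hq')]
  linear_combination (ι q * ι f.denom) * dcross
    - (ι (derivative f.denom) * ι q + ι (derivative q) * ι f.denom) * cross

theorem ratD_algebraMap (p : Polynomial ℂ) : ratD (ι p) = ι (derivative p) := by
  simpa using ratD_algebraMap_div p 1 one_ne_zero

theorem ratD_add (f g : RatFunc ℂ) : ratD (f + g) = ratD f + ratD g := by
  induction f using RatFunc.induction_on with | f a b hb =>
  induction g using RatFunc.induction_on with | f c d hd =>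
  have hb' : ι b ≠ 0 := algebraMap_ne_zero hb
  have hd' : ι d ≠ 0 := algebraMap_ne_zero hd
  rw [div_add_div _ _ hb' hd', ← map_mul, ← map_mul, ← map_mul, ← map_add,
    ratD_algebraMap_div _ _ (mul_ne_zero hb hd), ratD_algebraMap_div _ _ hb,
    ratD_algebraMap_div _ _ hd]
  simp only [derivative_mul, map_add, map_mul]
  field_simp
  ring

theorem ratD_mul (f g : RatFunc ℂ) : ratD (f * g) = f * ratD g + g * ratD f := by
  induction f using RatFunc.induction_on with | f a b hb =>
  induction g using RatFunc.induction_on with | f c d hd =>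
  have hb' : ι b ≠ 0 := algebraMap_ne_zero hb
  have hd' : ι d ≠ 0 := algebraMap_ne_zero hd
  rw [div_mul_div_comm, ← map_mul, ← map_mul, ratD_algebraMap_div _ _ (mul_ne_zero hb hd),
    ratD_algebraMap_div _ _ hb, ratD_algebraMap_div _ _ hd]
  simp only [derivative_mul, map_add, map_mul]
  field_simp
  ring

end QuotientRule

theorem ratD_C (c : ℂ) : ratD (C c) = 0 := by
  rw [← algebraMap_C, ratD_algebraMap, Polynomial.derivative_C, map_zero]

theorem ratD_X : ratD X = 1 := by
  rw [← algebraMap_X, ratD_algebraMap, Polynomial.derivative_X, map_one]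

noncomputable def ratDerivation : Derivation ℂ (RatFunc ℂ) (RatFunc ℂ) where
  toFun := ratD
  map_add' := ratD_add
  map_smul' c f := by
    rw [RingHom.id_apply, Algebra.smul_def, Algebra.smul_def, algebraMap_eq_C, ratD_mul, ratD_C,
      mul_zero, add_zero]
  map_one_eq_zero' := by simpa using ratD_C 1
  leibniz' := ratD_mul

theorem ratDerivation_apply (f : RatFunc ℂ) : ratDerivation f = ratD f := rfl

theorem ratD_zero : ratD 0 = 0 :=
  map_zero ratDerivation

theorem ratD_sub (f g : RatFunc ℂ) : ratD (f - g) = ratD f - ratD g :=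
  map_sub ratDerivation f g

theorem ratD_natCast (n : ℕ) : ratD (n : RatFunc ℂ) = 0 :=
  ratDerivation.map_natCast n

theorem ratD_ofNat (n : ℕ) [n.AtLeastTwo] : ratD (ofNat(n) : RatFunc ℂ) = 0 := by
  rw [← Nat.cast_ofNat, ratD_natCast]

theorem ratD_div_X_pow (a : RatFunc ℂ) (n : ℕ) :
    ratD (a / X ^ n) = ratD a / X ^ n - (n : RatFunc ℂ) * a / X ^ (n + 1) := by
  have hX : (X : RatFunc ℂ) ≠ 0 := X_ne_zero
  rw [← ratDerivation_apply, Derivation.leibniz_div, Derivation.leibniz_pow, ratDerivation_apply,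
    ratDerivation_apply, ratD_X]
  cases n with
  | zero => simp
  | succ n =>
    simp only [smul_eq_mul, nsmul_eq_mul, mul_one, Nat.add_sub_cancel]
    field_simp
    push_cast
    ring

/-- The ring `ℂ(x)[∂]` acts faithfully on `ℂ(x)`, so `L·P₄ = P₄·L` is the equality of the
compositions. -/
theorem stmt2 (h : ℂ) : ∀ f : RatFunc ℂ, opL h (opP4 f) = opP4 (opL h f) := by
  intro f
  simp only [opL, opP4, Function.iterate_succ_apply', Function.iterate_zero_apply, ratD_add,
    ratD_sub, ratD_mul, ratD_div_X_pow, ratD_ofNat, ratD_natCast, ratD_C, ratD_zero,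
    Nat.cast_ofNat]
  ring
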